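/- arXiv:2407.03756 — 3 statements merged into one kernel-verified Lean document; each statement's English description precedes it below -/
import Mathlib

section
/- Suppose x, y ∈ ℕ₀^c satisfy β_n(x) ≤ β_n(y) for all n, let x' = x + e_i and y' = y + e_j with x^i = l and y^j = m, and suppose α_m(y) < α_{l−1}(x). Then β_n(x') ≤ β_n(y') for all n. -/
/-- `α_n(x)` with integer index `n`, so that `α_{-1}(x) = c`. -/
def alphaZ (c : ℕ) (n : ℤ) (x : Fin c → ℕ) : ℕ :=
  (Finset.univ.filter fun i => n < (x i : ℤ)).card

def beta (c : ℕ) (n : ℕ) (x : Fin c → ℕ) : ℕ :=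
  ∑ i, (x i - n)

lemma beta_step (c n : ℕ) (x : Fin c → ℕ) :
    beta c n x = beta c (n + 1) x + alphaZ c (n : ℤ) x := by
  unfold beta alphaZ
  rw [Finset.card_eq_sum_ones, Finset.sum_filter, ← Finset.sum_add_distrib]
  apply Finset.sum_congr rfl
  intro k _
  split <;> omega

lemma alphaZ_anti (c : ℕ) (x : Fin c → ℕ) {a b : ℤ} (h : a ≤ b) :
    alphaZ c b x ≤ alphaZ c a x := by
  apply Finset.card_le_card
  intro k hk
  simp only [Finset.mem_filter] at *
  exact ⟨hk.1, lt_of_le_of_lt h hk.2⟩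

lemma beta_update (c n : ℕ) (x : Fin c → ℕ) (i : Fin c) :
    beta c n (Function.update x i (x i + 1)) =
      beta c n x + (if n ≤ x i then 1 else 0) := by
  unfold beta
  have h1 : (fun k => Function.update x i (x i + 1) k - n) =
      Function.update (fun k => x k - n) i (x i + 1 - n) := by
    funext k
    by_cases hk : k = i
    · subst hk; simp
    · simp [Function.update_of_ne hk]
  have h2 : ∑ k, (x k - n) = (x i - n) + ∑ k ∈ Finset.univ \ {i}, (x k - n) := by
    conv_lhs => rw [← Function.update_eq_self i (fun k => x k - n)]
    exact Finset.sum_update_of_mem (Finset.mem_univ i) _ _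
  calc ∑ k, (Function.update x i (x i + 1) k - n)
      = ∑ k, Function.update (fun k => x k - n) i (x i + 1 - n) k := by rw [h1]
    _ = (x i + 1 - n) + ∑ k ∈ Finset.univ \ {i}, (x k - n) :=
        Finset.sum_update_of_mem (Finset.mem_univ i) _ _
    _ = _ := by rw [h2]; split <;> omega

/-- Arrival-case preservation of ≼: if `β_n(x) ≤ β_n(y)` for all `n`,
`x' = x + e_i` with `x^i = l`, `y' = y + e_j` with `y^j = m`, and
`α_m(y) < α_{l-1}(x)`, then `β_n(x') ≤ β_n(y')` for all `n`. -/
theorem arrival_preserves_preceq (c : ℕ) (hc : 1 ≤ c) (x y : Fin c → ℕ)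
    (i j : Fin c) (l m : ℕ)
    (hxy : ∀ n : ℕ, beta c n x ≤ beta c n y)
    (hl : x i = l) (hm : y j = m)
    (halpha : alphaZ c (m : ℤ) y < alphaZ c ((l : ℤ) - 1) x) :
    ∀ n : ℕ, beta c n (Function.update x i (x i + 1)) ≤
      beta c n (Function.update y j (y j + 1)) := by
  intro n
  rw [beta_update, beta_update, hl, hm]
  by_cases h1 : n ≤ m
  · have := hxy n
    split <;> omega
  · by_cases h2 : n ≤ l
    · -- m < n ≤ l : need beta n x + 1 ≤ beta n y
      push_neg at h1
      obtain ⟨k, rfl⟩ : ∃ k, n = k + 1 := ⟨n - 1, by omega⟩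
      have hb := hxy k
      have hx := beta_step c k x
      have hy := beta_step c k y
      have ha1 : alphaZ c (k : ℤ) y ≤ alphaZ c (m : ℤ) y :=
        alphaZ_anti c y (by exact_mod_cast Nat.lt_succ_iff.mp h1)
      have ha2 : alphaZ c ((l : ℤ) - 1) x ≤ alphaZ c (k : ℤ) x :=
        alphaZ_anti c x (by push_cast; omega)
      simp only [h2, if_pos, if_neg (by omega : ¬ k + 1 ≤ m)]
      omega
    · have := hxy n
      split <;> omega
end

section
/- Departure-step preservation: if x, y ∈ ℕ₀^c satisfy β_n(x) ≤ β_n(y) for all n ∈ ℕ₀, x' = x − e_i with x^i = l ≥ 1, y' = y − e_j with y^j = m ≥ 1, and α_l(x) < α_{m−1}(y), then β_n(x') ≤ β_n(y') for all n ∈ ℕ₀. -/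
def alpha (c : ℕ) (n : ℕ) (x : Fin c → ℕ) : ℕ :=
  (Finset.univ.filter fun i => n < x i).card

/-!
Removing one customer from a queue of length `z i` lowers `β_n` by one exactly when `n < z i`.
Only the thresholds `l ≤ n < m` are delicate, where `β_n(x)` stays and `β_n(y)` drops; there
`β_n = α_n + β_{n+1}` together with `α_n(x) ≤ α_l(x) < α_{m-1}(y) ≤ α_n(y)` makes
`β_n(x) < β_n(y)`, which absorbs the drop.
-/

open Finset Function

section

variable {c : ℕ}

lemma beta_update_sub_one_add (n : ℕ) (z : Fin c → ℕ) (i : Fin c) :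
    beta c n (update z i (z i - 1)) + (if n < z i then 1 else 0) = beta c n z := by
  simp only [beta, ← add_sum_erase _ _ (mem_univ i), update_self]
  rw [sum_congr rfl fun k hk => by rw [update_of_ne (ne_of_mem_erase hk)]]
  split <;> omega

lemma beta_update_sub_one_add_one {n : ℕ} {z : Fin c → ℕ} {i : Fin c} (h : n < z i) :
    beta c n (update z i (z i - 1)) + 1 = beta c n z := by
  simpa [h] using beta_update_sub_one_add n z i

lemma beta_update_sub_one_of_le {n : ℕ} {z : Fin c → ℕ} {i : Fin c} (h : z i ≤ n) :
    beta c n (update z i (z i - 1)) = beta c n z := by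
  simpa [h.not_gt] using beta_update_sub_one_add n z i

lemma beta_update_sub_one_le (n : ℕ) (z : Fin c → ℕ) (i : Fin c) :
    beta c n (update z i (z i - 1)) ≤ beta c n z :=
  (Nat.le_add_right _ _).trans (beta_update_sub_one_add n z i).le

lemma beta_eq_alpha_add_beta_succ (n : ℕ) (z : Fin c → ℕ) :
    beta c n z = alpha c n z + beta c (n + 1) z := by
  rw [beta, beta, alpha, card_filter, ← sum_add_distrib]
  exact sum_congr rfl fun k _ => by split <;> omega

lemma alpha_antitone (z : Fin c → ℕ) : Antitone fun n => alpha c n z :=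
  fun _ _ h => card_le_card fun k hk => by
    simp only [mem_filter, mem_univ, true_and] at hk ⊢
    omega

lemma beta_lt_beta_of_alpha_lt {n : ℕ} {x y : Fin c → ℕ}
    (hbeta : beta c (n + 1) x ≤ beta c (n + 1) y) (halpha : alpha c n x < alpha c n y) :
    beta c n x < beta c n y := by
  rw [beta_eq_alpha_add_beta_succ n x, beta_eq_alpha_add_beta_succ n y]
  omega

end

theorem departure_preserves_preceq_general (c : ℕ) (x y : Fin c → ℕ)
    (i j : Fin c) (l m : ℕ)
    (hxy : ∀ n : ℕ, beta c n x ≤ beta c n y)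
    (hl : x i = l) (hm : y j = m)
    (halpha : alpha c l x < alpha c (m - 1) y) :
    ∀ n : ℕ, beta c n (Function.update x i (x i - 1)) ≤
      beta c n (Function.update y j (y j - 1)) := by
  intro n
  rcases le_or_gt m n with hmn | hnm
  · calc beta c n (update x i (x i - 1)) ≤ beta c n x := beta_update_sub_one_le n x i
      _ ≤ beta c n y := hxy n
      _ = beta c n (update y j (y j - 1)) := (beta_update_sub_one_of_le (hm ▸ hmn)).symm
  have hy := beta_update_sub_one_add_one (hm ▸ hnm : n < y j)
  rcases lt_or_ge n l with hnl | hln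
  · have hx := beta_update_sub_one_add_one (hl ▸ hnl : n < x i)
    have := hxy n
    omega
  · have hx := beta_update_sub_one_of_le (hl ▸ hln : x i ≤ n)
    have halpha_n : alpha c n x < alpha c n y :=
      (alpha_antitone x hln).trans_lt (halpha.trans_le (alpha_antitone y (by omega)))
    have := beta_lt_beta_of_alpha_lt (hxy (n + 1)) halpha_n
    omega

/-- Departure-case preservation of ≼: if `β_n(x) ≤ β_n(y)` for all `n`,
`x' = x - e_i` with `x^i = l ≥ 1`, `y' = y - e_j` with `y^j = m ≥ 1`, and
`α_l(x) < α_{m-1}(y)`, then `β_n(x') ≤ β_n(y')` for all `n`. -/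
theorem departure_preserves_preceq (c : ℕ) (hc : 1 ≤ c) (x y : Fin c → ℕ)
    (i j : Fin c) (l m : ℕ)
    (hxy : ∀ n : ℕ, beta c n x ≤ beta c n y)
    (hl : x i = l) (hl1 : 1 ≤ l) (hm : y j = m) (hm1 : 1 ≤ m)
    (halpha : alpha c l x < alpha c (m - 1) y) :
    ∀ n : ℕ, beta c n (Function.update x i (x i - 1)) ≤
      beta c n (Function.update y j (y j - 1)) :=
  departure_preserves_preceq_general c x y i j l m hxy hl hm halpha
end

section
/- For x, y ∈ ℕ₀^c, x ∼ y (i.e., β_n(x) = β_n(y) for all n) if and only if the non-decreasing rearrangements of x and y are equal: x́ = ý. -/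
/-! `β_n(x)` depends only on the multiset of entries of `x`, and once its size `c` is fixed (the
`β_n` are blind to zero entries) these numbers recover it: `β_n - β_{n+1}` counts the entries
`> n`, and the entries equal to `v` are those `≥ v` but not `> v`. Equal multisets of entries
amount to equal sorted rearrangements, by uniqueness of the sorted permutation. -/

namespace Multiset

theorem countP_le_eq_count_add_countP_lt {α : Type*} [LinearOrder α] (s : Multiset α) (v : α) :
    s.countP (v ≤ ·) = s.count v + s.countP (v < ·) := by
  induction s using Multiset.induction_on with
  | empty => simp
  | cons a s ih =>
    rcases lt_trichotomy v a with hva | rfl | hav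
    · simp [hva, hva.le, hva.ne, ih]
      omega
    · simp [ih]
      omega
    · simp [hav.not_ge, hav.not_gt, hav.ne', ih]

theorem sum_map_tsub_eq_sum_map_tsub_succ_add_countP (s : Multiset ℕ) (n : ℕ) :
    (s.map (· - n)).sum = (s.map (· - (n + 1))).sum + s.countP (n < ·) := by
  induction s using Multiset.induction_on with
  | empty => simp
  | cons a s ih =>
    by_cases h : n < a <;> simp [h, ih] <;> omega

theorem eq_of_card_eq_of_sum_map_tsub_eq {s t : Multiset ℕ} (hcard : card s = card t)
    (h : ∀ n, (s.map (· - n)).sum = (t.map (· - n)).sum) : s = t := by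
  have hlt : ∀ n, s.countP (n < ·) = t.countP (n < ·) := fun n => by
    have := h n
    have := h (n + 1)
    rw [sum_map_tsub_eq_sum_map_tsub_succ_add_countP s n,
      sum_map_tsub_eq_sum_map_tsub_succ_add_countP t n] at *
    omega
  have hle : ∀ n, s.countP (n ≤ ·) = t.countP (n ≤ ·)
    | 0 => by simpa using hcard
    | n + 1 => by simpa only [Nat.succ_le_iff] using hlt n
  ext v
  have := hle v
  rw [countP_le_eq_count_add_countP_lt, countP_le_eq_count_add_countP_lt, hlt v] at this
  omega

end Multiset

theorem Tuple.comp_sort_eq_comp_sort_iff {α : Type*} [LinearOrder α] {n : ℕ} {f g : Fin n → α} :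
    f ∘ sort f = g ∘ sort g ↔ (List.ofFn f).Perm (List.ofFn g) := by
  have hf := (sort f).ofFn_comp_perm f
  have hg := (sort g).ofFn_comp_perm g
  constructor
  · intro h
    exact hf.symm.trans (h ▸ hg)
  · intro h
    exact List.ofFn_injective <| (hf.trans (h.trans hg.symm)).eq_of_sortedLE
      (monotone_sort f).sortedLE_ofFn (monotone_sort g).sortedLE_ofFn

theorem beta_eq_sum_map_tsub (c n : ℕ) (x : Fin c → ℕ) :
    beta c n x = ((List.ofFn x : Multiset ℕ).map (· - n)).sum := by
  rw [beta, Finset.sum_eq_multiset_sum, ← Fin.univ_val_map, Multiset.map_map]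
  rfl

theorem indifference_iff_sorted_eq_general (c : ℕ) (x y : Fin c → ℕ) :
    (∀ n : ℕ, beta c n x = beta c n y) ↔
      x ∘ Tuple.sort x = y ∘ Tuple.sort y := by
  simp_rw [beta_eq_sum_map_tsub, Tuple.comp_sort_eq_comp_sort_iff, ← Multiset.coe_eq_coe]
  exact ⟨Multiset.eq_of_card_eq_of_sum_map_tsub_eq (by simp), fun h n => by rw [h]⟩

/-- `x ∼ y` (i.e. `β_n(x) = β_n(y)` for all `n`) iff the non-decreasing
rearrangements of `x` and `y` coincide. -/
theorem indifference_iff_sorted_eq (c : ℕ) (hc : 1 ≤ c) (x y : Fin c → ℕ) :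
    (∀ n : ℕ, beta c n x = beta c n y) ↔
      x ∘ Tuple.sort x = y ∘ Tuple.sort y :=
  indifference_iff_sorted_eq_general c x y
end
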